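/- (Proposition 2) Let n ≥ 3 and let p be a complex number with p ≠ 0 and p⁴ ≠ 1; set q = p². Let J_1, …, J_{n−1} be linear endomorphisms of a complex vector space V satisfying the U′_q(so_n) relations. Define linear endomorphisms J⊗_1, …, J⊗_{n−1} of ℂⁿ ⊗ V (with v_1, …, v_n the standard basis of ℂⁿ) by: J⊗_j (v_j ⊗ w) = q (v_j ⊗ J_j w) − p (v_{j+1} ⊗ w), J⊗_j (v_{j+1} ⊗ w) = q⁻¹ (v_{j+1} ⊗ J_j w) + p⁻¹ (v_j ⊗ w), and J⊗_j (v_k ⊗ w) = v_k ⊗ J_j w for k ∉ {j, j+1}. Then J⊗_1, …, J⊗_{n−1} satisfy the U′_q(so_n) relations; that is, they define the tensor product T_𝟏 ⊗ T of the vector representation with the given representation. -/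
import Mathlib


open TensorProduct

set_option maxHeartbeats 1600000

/-- The `U'_q(so_n)` relations for operators `I 1, …, I (n-1)` on a complex vector space. -/
def IsUqSon {V : Type*} [AddCommGroup V] [Module ℂ V] (n : ℕ) (q : ℂ)
    (I : ℕ → Module.End ℂ V) : Prop :=
  (∀ j, 2 ≤ j → j ≤ n - 1 →
    (I j ^ 2 * I (j - 1) + I (j - 1) * I j ^ 2
        - (q + q⁻¹) • (I j * I (j - 1) * I j) = -I (j - 1)) ∧
    (I (j - 1) ^ 2 * I j + I j * I (j - 1) ^ 2
        - (q + q⁻¹) • (I (j - 1) * I j * I (j - 1)) = -I j)) ∧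
  (∀ i j, 1 ≤ i → i ≤ n - 1 → 1 ≤ j → j ≤ n - 1 → (i + 1 < j ∨ j + 1 < i) →
    I i * I j = I j * I i)

/-- The standard basis vector `v_k` (`1 ≤ k ≤ n`, one-based) of `ℂⁿ`;
out-of-range indices give `0`. -/
noncomputable def stdv (n k : ℕ) : Fin n → ℂ :=
  if h : 1 ≤ k ∧ k ≤ n then Pi.single (⟨k - 1, by omega⟩ : Fin n) 1 else 0

lemma stdv_single (n : ℕ) (i : Fin n) : stdv n (i.1 + 1) = Pi.single i 1 := by
  have h : 1 ≤ i.1 + 1 ∧ i.1 + 1 ≤ n := ⟨by omega, i.2⟩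
  simp [stdv, h]

lemma endext {V : Type*} [AddCommGroup V] [Module ℂ V] {n : ℕ}
    (A B : Module.End ℂ ((Fin n → ℂ) ⊗[ℂ] V))
    (h : ∀ k, 1 ≤ k → k ≤ n → ∀ w : V, A (stdv n k ⊗ₜ[ℂ] w) = B (stdv n k ⊗ₜ[ℂ] w)) :
    A = B := by
  apply LinearMap.ext
  intro x
  induction x using TensorProduct.induction_on with
  | zero => simp
  | add y z hy hz => simp [map_add, hy, hz]
  | tmul f w =>
    have hf : f = ∑ i : Fin n, f i • (Pi.single i 1 : Fin n → ℂ) := by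
      funext m
      simp [Finset.sum_apply, Pi.single_apply]
    rw [hf, sum_tmul]
    rw [map_sum, map_sum]
    refine Finset.sum_congr rfl fun i _ => ?_
    rw [← smul_tmul', LinearMap.map_smul, LinearMap.map_smul, ← stdv_single n i,
      h (i.1 + 1) (by omega) (by omega) w]


/-- **Proposition 2: tensor product of the vector representation with an arbitrary
representation of `U'_q(so_n)`.**  With `q = p²` (`p ≠ 0`, `p⁴ ≠ 1`), if `J_1, …, J_{n-1}`
satisfy the `U'_q(so_n)` relations on `V`, then the operators `J⊗_j` on `ℂⁿ ⊗ V` given by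
`J⊗_j (v_j ⊗ w) = q v_j ⊗ J_j w - p v_{j+1} ⊗ w`,
`J⊗_j (v_{j+1} ⊗ w) = q⁻¹ v_{j+1} ⊗ J_j w + p⁻¹ v_j ⊗ w`, and
`J⊗_j (v_k ⊗ w) = v_k ⊗ J_j w` for `k ∉ {j, j+1}`,
satisfy the `U'_q(so_n)` relations. -/
theorem stmt_6 {V : Type*} [AddCommGroup V] [Module ℂ V]
    (n : ℕ) (hn : 3 ≤ n) (p : ℂ) (hp : p ≠ 0) (hp4 : p ^ 4 ≠ 1)
    (J : ℕ → Module.End ℂ V) (hJ : IsUqSon n (p ^ 2) J)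
    (Jt : ℕ → Module.End ℂ ((Fin n → ℂ) ⊗[ℂ] V))
    (hJt1 : ∀ j, 1 ≤ j → j ≤ n - 1 → ∀ w : V,
      Jt j (stdv n j ⊗ₜ[ℂ] w)
        = (p ^ 2) • (stdv n j ⊗ₜ[ℂ] J j w) - p • (stdv n (j + 1) ⊗ₜ[ℂ] w))
    (hJt2 : ∀ j, 1 ≤ j → j ≤ n - 1 → ∀ w : V,
      Jt j (stdv n (j + 1) ⊗ₜ[ℂ] w)
        = (p ^ 2)⁻¹ • (stdv n (j + 1) ⊗ₜ[ℂ] J j w) + p⁻¹ • (stdv n j ⊗ₜ[ℂ] w))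
    (hJt3 : ∀ j k, 1 ≤ j → j ≤ n - 1 → 1 ≤ k → k ≤ n → k ≠ j → k ≠ j + 1 →
      ∀ w : V, Jt j (stdv n k ⊗ₜ[ℂ] w) = stdv n k ⊗ₜ[ℂ] J j w) :
    IsUqSon n (p ^ 2) Jt := by
  obtain ⟨hJrel, hJcomm⟩ := hJ
  constructor
  · intro j h2 hle
    have hj1 : 1 ≤ j - 1 := by omega
    have hjn : j - 1 ≤ n - 1 := by omega
    have hjj : j - 1 + 1 = j := by omega
    have hA1 : ∀ w : V, Jt (j-1) (stdv n (j-1) ⊗ₜ[ℂ] w)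
        = (p^2) • (stdv n (j-1) ⊗ₜ[ℂ] J (j-1) w) - p • (stdv n j ⊗ₜ[ℂ] w) := by
      intro w; have := hJt1 (j-1) hj1 hjn w; rwa [hjj] at this
    have hA2 : ∀ w : V, Jt (j-1) (stdv n j ⊗ₜ[ℂ] w)
        = (p^2)⁻¹ • (stdv n j ⊗ₜ[ℂ] J (j-1) w) + p⁻¹ • (stdv n (j-1) ⊗ₜ[ℂ] w) := by
      intro w; have := hJt2 (j-1) hj1 hjn w; rwa [hjj] at this
    have hA3 : ∀ w : V, Jt (j-1) (stdv n (j+1) ⊗ₜ[ℂ] w) = stdv n (j+1) ⊗ₜ[ℂ] J (j-1) w :=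
      fun w => hJt3 (j-1) (j+1) hj1 hjn (by omega) (by omega) (by omega) (by omega) w
    have hB1 : ∀ w : V, Jt j (stdv n (j-1) ⊗ₜ[ℂ] w) = stdv n (j-1) ⊗ₜ[ℂ] J j w :=
      fun w => hJt3 j (j-1) (by omega) hle (by omega) (by omega) (by omega) (by omega) w
    have hB2 := hJt1 j (by omega) hle
    have hB3 := hJt2 j (by omega) hle
    obtain ⟨hr1, hr2⟩ := hJrel j h2 hle
    have hrw1 : ∀ x : V, J j (J j (J (j-1) x))
        = (p^2 + (p^2)⁻¹) • J j (J (j-1) (J j x)) - J (j-1) (J j (J j x)) - J (j-1) x := by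
      intro x
      have h := LinearMap.congr_fun hr1 x
      simp only [pow_two, LinearMap.sub_apply, LinearMap.add_apply, Module.End.mul_apply,
        LinearMap.smul_apply, LinearMap.neg_apply] at h
      linear_combination (norm := module) h
    have hrw2 : ∀ x : V, J (j-1) (J (j-1) (J j x))
        = (p^2 + (p^2)⁻¹) • J (j-1) (J j (J (j-1) x)) - J j (J (j-1) (J (j-1) x)) - J j x := by
      intro x
      have h := LinearMap.congr_fun hr2 x
      simp only [pow_two, LinearMap.sub_apply, LinearMap.add_apply, Module.End.mul_apply,
        LinearMap.smul_apply, LinearMap.neg_apply] at h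
      linear_combination (norm := module) h
    constructor
    · apply endext
      intro k hk1 hkn w
      simp only [pow_two, LinearMap.sub_apply, LinearMap.add_apply, Module.End.mul_apply,
        LinearMap.smul_apply, LinearMap.neg_apply]
      by_cases hka : k = j - 1
      · subst hka
        simp only [hA1, hA2, hA3, hB1, hB2, hB3, map_add, map_sub, map_smul, smul_add,
          smul_sub, smul_smul, hrw1, tmul_add, tmul_sub, tmul_smul]
        match_scalars <;> (field_simp; try ring_nf; try field_simp; try ring)
      · by_cases hkb : k = j
        · subst hkb
          simp only [hA1, hA2, hA3, hB1, hB2, hB3, map_add, map_sub, map_smul, smul_add,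
            smul_sub, smul_smul, hrw1, tmul_add, tmul_sub, tmul_smul]
          match_scalars <;> (field_simp; try ring_nf; try field_simp; try ring)
        · by_cases hkc : k = j + 1
          · subst hkc
            simp only [hA1, hA2, hA3, hB1, hB2, hB3, map_add, map_sub, map_smul, smul_add,
              smul_sub, smul_smul, hrw1, tmul_add, tmul_sub, tmul_smul]
            match_scalars <;> (field_simp; try ring_nf; try field_simp; try ring)
          · have hC1 : ∀ x : V, Jt (j-1) (stdv n k ⊗ₜ[ℂ] x) = stdv n k ⊗ₜ[ℂ] J (j-1) x :=
              fun x => hJt3 (j-1) k hj1 hjn hk1 hkn (by omega) (by omega) x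
            have hC2 : ∀ x : V, Jt j (stdv n k ⊗ₜ[ℂ] x) = stdv n k ⊗ₜ[ℂ] J j x :=
              fun x => hJt3 j k (by omega) hle hk1 hkn (by omega) (by omega) x
            simp only [hC1, hC2, map_add, map_sub, map_smul, smul_add,
              smul_sub, smul_smul, hrw1, tmul_add, tmul_sub, tmul_smul]
            match_scalars <;> (field_simp; try ring_nf; try field_simp; try ring)
    · apply endext
      intro k hk1 hkn w
      simp only [pow_two, LinearMap.sub_apply, LinearMap.add_apply, Module.End.mul_apply,
        LinearMap.smul_apply, LinearMap.neg_apply]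
      by_cases hka : k = j - 1
      · subst hka
        simp only [hA1, hA2, hA3, hB1, hB2, hB3, map_add, map_sub, map_smul, smul_add,
          smul_sub, smul_smul, hrw2, tmul_add, tmul_sub, tmul_smul]
        match_scalars <;> (field_simp; try ring_nf; try field_simp; try ring)
      · by_cases hkb : k = j
        · subst hkb
          simp only [hA1, hA2, hA3, hB1, hB2, hB3, map_add, map_sub, map_smul, smul_add,
            smul_sub, smul_smul, hrw2, tmul_add, tmul_sub, tmul_smul]
          match_scalars <;> (field_simp; try ring_nf; try field_simp; try ring)
        · by_cases hkc : k = j + 1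
          · subst hkc
            simp only [hA1, hA2, hA3, hB1, hB2, hB3, map_add, map_sub, map_smul, smul_add,
              smul_sub, smul_smul, hrw2, tmul_add, tmul_sub, tmul_smul]
            match_scalars <;> (field_simp; try ring_nf; try field_simp; try ring)
          · have hC1 : ∀ x : V, Jt (j-1) (stdv n k ⊗ₜ[ℂ] x) = stdv n k ⊗ₜ[ℂ] J (j-1) x :=
              fun x => hJt3 (j-1) k hj1 hjn hk1 hkn (by omega) (by omega) x
            have hC2 : ∀ x : V, Jt j (stdv n k ⊗ₜ[ℂ] x) = stdv n k ⊗ₜ[ℂ] J j x :=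
              fun x => hJt3 j k (by omega) hle hk1 hkn (by omega) (by omega) x
            simp only [hC1, hC2, map_add, map_sub, map_smul, smul_add,
              smul_sub, smul_smul, hrw2, tmul_add, tmul_sub, tmul_smul]
            match_scalars <;> (field_simp; try ring_nf; try field_simp; try ring)
  · suffices H : ∀ i j, 1 ≤ i → i ≤ n - 1 → 1 ≤ j → j ≤ n - 1 → i + 1 < j →
        Jt i * Jt j = Jt j * Jt i by
      intro i j hi1 hin hj1 hjn hor
      rcases hor with h | h
      · exact H i j hi1 hin hj1 hjn h
      · exact (H j i hj1 hjn hi1 hin h).symm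
    intro i j hi1 hin hj1 hjn hij
    have hcomm : ∀ x : V, J i (J j x) = J j (J i x) := by
      intro x
      have h := LinearMap.congr_fun (hJcomm i j hi1 hin hj1 hjn (Or.inl hij)) x
      simpa using h
    have hI1 := hJt1 i hi1 hin
    have hI2 := hJt2 i hi1 hin
    have hK1 := hJt1 j hj1 hjn
    have hK2 := hJt2 j hj1 hjn
    apply endext
    intro k hk1 hkn w
    simp only [Module.End.mul_apply]
    by_cases hki : k = i
    · subst hki
      have hX : ∀ x : V, Jt j (stdv n k ⊗ₜ[ℂ] x) = stdv n k ⊗ₜ[ℂ] J j x :=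
        fun x => hJt3 j k hj1 hjn hk1 hkn (by omega) (by omega) x
      have hY : ∀ x : V, Jt j (stdv n (k+1) ⊗ₜ[ℂ] x) = stdv n (k+1) ⊗ₜ[ℂ] J j x :=
        fun x => hJt3 j (k+1) hj1 hjn (by omega) (by omega) (by omega) (by omega) x
      simp only [hI1, hX, hY, map_add, map_sub, map_smul, hcomm]
    · by_cases hki' : k = i + 1
      · subst hki'
        have hX : ∀ x : V, Jt j (stdv n (i+1) ⊗ₜ[ℂ] x) = stdv n (i+1) ⊗ₜ[ℂ] J j x :=
          fun x => hJt3 j (i+1) hj1 hjn (by omega) (by omega) (by omega) (by omega) x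
        have hY : ∀ x : V, Jt j (stdv n i ⊗ₜ[ℂ] x) = stdv n i ⊗ₜ[ℂ] J j x :=
          fun x => hJt3 j i hj1 hjn (by omega) (by omega) (by omega) (by omega) x
        simp only [hI2, hX, hY, map_add, map_sub, map_smul, hcomm]
      · by_cases hkj : k = j
        · subst hkj
          have hX : ∀ x : V, Jt i (stdv n k ⊗ₜ[ℂ] x) = stdv n k ⊗ₜ[ℂ] J i x :=
            fun x => hJt3 i k hi1 hin hk1 hkn (by omega) (by omega) x
          have hY : ∀ x : V, Jt i (stdv n (k+1) ⊗ₜ[ℂ] x) = stdv n (k+1) ⊗ₜ[ℂ] J i x :=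
            fun x => hJt3 i (k+1) hi1 hin (by omega) (by omega) (by omega) (by omega) x
          simp only [hK1, hX, hY, map_add, map_sub, map_smul, hcomm]
        · by_cases hkj' : k = j + 1
          · subst hkj'
            have hX : ∀ x : V, Jt i (stdv n (j+1) ⊗ₜ[ℂ] x) = stdv n (j+1) ⊗ₜ[ℂ] J i x :=
              fun x => hJt3 i (j+1) hi1 hin (by omega) (by omega) (by omega) (by omega) x
            have hY : ∀ x : V, Jt i (stdv n j ⊗ₜ[ℂ] x) = stdv n j ⊗ₜ[ℂ] J i x :=
              fun x => hJt3 i j hi1 hin (by omega) (by omega) (by omega) (by omega) x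
            simp only [hK2, hX, hY, map_add, map_sub, map_smul, hcomm]
          · have hX : ∀ x : V, Jt i (stdv n k ⊗ₜ[ℂ] x) = stdv n k ⊗ₜ[ℂ] J i x :=
              fun x => hJt3 i k hi1 hin hk1 hkn (by omega) (by omega) x
            have hY : ∀ x : V, Jt j (stdv n k ⊗ₜ[ℂ] x) = stdv n k ⊗ₜ[ℂ] J j x :=
              fun x => hJt3 j k hj1 hjn hk1 hkn (by omega) (by omega) x
            simp only [hX, hY, hcomm]
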